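/- arXiv:2309.11474 — 2 statements merged into one kernel-verified Lean document; each statement's English description precedes it below -/
import Mathlib

section
/- For every integer n ≥ 3 with n ≠ 4, the Praeger–Xu graph PX(n,1) has determining number Det(PX(n,1)) = n and distinguishing number Dist(PX(n,1)) = 3. -/
/-- The Praeger–Xu graph `PX(n,k)`: vertices are pairs `(i,x)` with `i : ZMod n` and
`x : Fin k → ZMod 2`; `(i,x)` and `(j,y)` are adjacent iff `j = i+1` and `y t = x (t+1)`
for all `0 ≤ t ≤ k-2`, or symmetrically `i = j+1` and `x t = y (t+1)` for all such `t`. -/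
def PX (n k : ℕ) : SimpleGraph (ZMod n × (Fin k → ZMod 2)) :=
  SimpleGraph.fromRel (fun u v =>
    v.1 = u.1 + 1 ∧ ∀ (t : ℕ) (ht : t + 1 < k),
      v.2 ⟨t, Nat.lt_of_succ_lt ht⟩ = u.2 ⟨t + 1, ht⟩)

/-- `S` is a determining set for `G`: the identity is the only automorphism of `G`
fixing every vertex of `S` pointwise. -/
def IsDeterminingSet {V : Type*} (G : SimpleGraph V) (S : Set V) : Prop :=
  ∀ φ : G ≃g G, (∀ v ∈ S, φ v = v) → ∀ v, φ v = v

/-- The determining number of `G`: the minimum size of a determining set. -/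
noncomputable def detNum {V : Type*} (G : SimpleGraph V) : ℕ :=
  sInf {m | ∃ S : Set V, S.ncard = m ∧ IsDeterminingSet G S}

/-- `c` is a distinguishing coloring of `G`: the identity is the only automorphism of `G`
preserving the coloring `c`. -/
def IsDistinguishing {V : Type*} {d : ℕ} (G : SimpleGraph V) (c : V → Fin d) : Prop :=
  ∀ φ : G ≃g G, (∀ v, c (φ v) = c v) → ∀ v, φ v = v

/-- The distinguishing number of `G`: the least number of colors in a distinguishing
coloring of `G`. -/
noncomputable def distNum {V : Type*} (G : SimpleGraph V) : ℕ :=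
  sInf {d | ∃ c : V → Fin d, IsDistinguishing G c}

section PXaux
variable {n : ℕ}


lemma cast_ne' (hn : 3 ≤ n) (m : ℕ) (hm : 0 < m) (hmn : ¬ n ∣ m) : ((m : ZMod n)) ≠ 0 := by
  intro h
  haveI : NeZero n := ⟨by omega⟩
  exact hmn ((ZMod.natCast_eq_zero_iff m n).mp h)

lemma one_ne' (hn : 3 ≤ n) : (1 : ZMod n) ≠ 0 := by
  have := cast_ne' hn 1 (by omega) (fun h => by have := Nat.le_of_dvd (by omega) h; omega)
  simpa using this

lemma two_ne' (hn : 3 ≤ n) : (2 : ZMod n) ≠ 0 := by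
  have := cast_ne' hn 2 (by omega) (fun h => by have := Nat.le_of_dvd (by omega) h; omega)
  simpa using this

lemma four_ne' (hn : 3 ≤ n) (hn4 : n ≠ 4) : (4 : ZMod n) ≠ 0 := by
  have := cast_ne' hn 4 (by omega) (by
    intro h
    have hle := Nat.le_of_dvd (by omega) h
    interval_cases n <;> omega)
  simpa using this

lemma PX_adj (hn : 3 ≤ n) (u v : ZMod n × (Fin 1 → ZMod 2)) :
    (PX n 1).Adj u v ↔ (v.1 = u.1 + 1 ∨ u.1 = v.1 + 1) := by
  constructor
  · rintro ⟨hne, h | h⟩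
    · exact Or.inl h.1
    · exact Or.inr h.1
  · intro h
    refine ⟨?_, ?_⟩
    · rintro rfl
      rcases h with h | h <;>
        exact one_ne' hn (by linear_combination -h)
    · rcases h with h | h
      · exact Or.inl ⟨h, fun t ht => absurd ht (by omega)⟩
      · exact Or.inr ⟨h, fun t ht => absurd ht (by omega)⟩

lemma fun_cases' (x : Fin 1 → ZMod 2) : x = (fun _ => 0) ∨ x = (fun _ => 1) := by
  have h : x 0 = 0 ∨ x 0 = 1 := by revert x; decide
  have hx : x = fun _ => x 0 := by
    funext t
    have : t = 0 := Subsingleton.elim _ _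
    rw [this]
  rcases h with h | h
  · left; rw [hx, h]
  · right; rw [hx, h]

lemma zero_ne_one_f : (fun _ => (0:ZMod 2) : Fin 1 → ZMod 2) ≠ (fun _ => 1) := by
  intro h
  have := congrFun h 0
  simp at this

lemma iso_fst_eq (hn : 3 ≤ n) (hn4 : n ≠ 4) (φ : PX n 1 ≃g PX n 1)
    (i : ZMod n) (x y : Fin 1 → ZMod 2) : (φ (i, x)).1 = (φ (i, y)).1 := by
  by_cases hxy : x = y
  · rw [hxy]
  set a := φ (i, x) with ha
  set b := φ (i, y) with hb
  have hab : a ≠ b := by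
    intro h
    exact hxy (by simpa using congrArg Prod.snd (φ.toEquiv.injective (h : φ.toEquiv (i,x) = φ.toEquiv (i,y))))
  -- neighborhoods agree
  have hN : ∀ w, (PX n 1).Adj a w ↔ (PX n 1).Adj b w := by
    intro w
    have h1 : (PX n 1).Adj a w ↔ (PX n 1).Adj (i, x) (φ.symm w) := by
      rw [ha]
      constructor
      · intro h
        have := φ.symm.map_rel_iff.mpr h
        simpa using this
      · intro h
        have := φ.map_rel_iff.mpr h
        simpa using this
    have h2 : (PX n 1).Adj b w ↔ (PX n 1).Adj (i, y) (φ.symm w) := by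
      rw [hb]
      constructor
      · intro h
        have := φ.symm.map_rel_iff.mpr h
        simpa using this
      · intro h
        have := φ.map_rel_iff.mpr h
        simpa using this
    rw [h1, h2, PX_adj hn, PX_adj hn]
  by_contra hne
  have hw1 : (PX n 1).Adj a (a.1 + 1, fun _ => 0) := (PX_adj hn _ _).mpr (Or.inl rfl)
  have hw1' := (PX_adj hn _ _).mp ((hN _).mp hw1)
  have hb2 : b.1 = a.1 + 2 := by
    rcases hw1' with h | h
    · exact absurd (by linear_combination h) hne
    · simpa [add_assoc, one_add_one_eq_two] using h
  have hw2 : (PX n 1).Adj b (b.1 + 1, fun _ => 0) := (PX_adj hn _ _).mpr (Or.inl rfl)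
  have hw2' := (PX_adj hn _ _).mp ((hN _).mpr hw2)
  rcases hw2' with h | h
  · exact hne (by linear_combination -h)
  · rw [hb2] at h
    exact four_ne' hn hn4 (by linear_combination -h)

lemma iso_apply_eq (hn : 3 ≤ n) (hn4 : n ≠ 4) (φ : PX n 1 ≃g PX n 1)
    (i : ZMod n) (h0 : φ (i, fun _ => 0) = (i, fun _ => 0)) (x : Fin 1 → ZMod 2) :
    φ (i, x) = (i, x) := by
  rcases fun_cases' x with rfl | rfl
  · exact h0
  · have hfst : (φ (i, fun _ => 1)).1 = i := by
      rw [iso_fst_eq hn hn4 φ i _ (fun _ => 0), h0]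
    rcases fun_cases' (φ (i, fun _ => 1)).2 with h2 | h2
    · exfalso
      have heq : φ (i, fun _ => (1:ZMod 2)) = (i, fun _ => 0) := Prod.ext hfst h2
      have := φ.toEquiv.injective (heq.trans h0.symm)
      have h3 := congrFun (congrArg Prod.snd this) 0
      simp at h3
    · exact Prod.ext hfst h2
lemma add_one_one (x : Fin 1 → ZMod 2) : (x + fun _ => 1) + (fun _ => 1) = x := by
  funext t
  have : ∀ z : ZMod 2, z + 1 + 1 = z := by decide
  exact this (x t)

lemma det_upper (hn : 3 ≤ n) (hn4 : n ≠ 4) :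
    ∃ S : Set (ZMod n × (Fin 1 → ZMod 2)), S.ncard = n ∧ IsDeterminingSet (PX n 1) S := by
  haveI : NeZero n := ⟨by omega⟩
  refine ⟨Set.range (fun i : ZMod n => (i, fun _ => 0)), ?_, ?_⟩
  · have hinj : Function.Injective (fun i : ZMod n => ((i, fun _ => 0) : ZMod n × (Fin 1 → ZMod 2))) := by
      intro a b h
      simpa using congrArg Prod.fst h
    rw [← Set.image_univ, Set.ncard_image_of_injective _ hinj, Set.ncard_univ, Nat.card_zmod]
  · intro φ hfix v
    obtain ⟨i, x⟩ := v
    have h0 : φ (i, fun _ => 0) = (i, fun _ => 0) := hfix _ ⟨i, rfl⟩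
    exact iso_apply_eq hn hn4 φ i h0 x

lemma det_lower (hn : 3 ≤ n) (hn4 : n ≠ 4) (m : ℕ)
    (h : ∃ S : Set (ZMod n × (Fin 1 → ZMod 2)), S.ncard = m ∧ IsDeterminingSet (PX n 1) S) :
    n ≤ m := by
  haveI : NeZero n := ⟨by omega⟩
  obtain ⟨S, hSm, hdet⟩ := h
  by_contra hlt
  push_neg at hlt
  have hex : ∃ i0 : ZMod n, i0 ∉ Prod.fst '' S := by
    by_contra hc
    push_neg at hc
    have hsub : (Set.univ : Set (ZMod n)) ⊆ Prod.fst '' S := fun i _ => hc i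
    have h1 : (Set.univ : Set (ZMod n)).ncard ≤ (Prod.fst '' S).ncard :=
      Set.ncard_le_ncard hsub (Set.toFinite _)
    have h2 : (Prod.fst '' S).ncard ≤ S.ncard := Set.ncard_image_le (Set.toFinite _)
    rw [Set.ncard_univ, Nat.card_zmod] at h1
    omega
  obtain ⟨i0, hi0⟩ := hex
  set g : (ZMod n × (Fin 1 → ZMod 2)) → (ZMod n × (Fin 1 → ZMod 2)) :=
    fun v => (v.1, if v.1 = i0 then v.2 + (fun _ => 1) else v.2) with hg
  have hgg : ∀ v, g (g v) = v := by
    intro v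
    by_cases hv : v.1 = i0
    · simp only [hg, hv, if_pos]
      simp [hv, add_one_one]
      exact Prod.ext hv.symm rfl
    · simp [hg, hv]
  have hgfst : ∀ v, (g v).1 = v.1 := fun v => rfl
  set e : (ZMod n × (Fin 1 → ZMod 2)) ≃ (ZMod n × (Fin 1 → ZMod 2)) :=
    ⟨g, g, hgg, hgg⟩ with he
  have hiso : ∀ u v, (PX n 1).Adj (e u) (e v) ↔ (PX n 1).Adj u v := by
    intro u v
    rw [PX_adj hn, PX_adj hn]
    rfl
  set φ : PX n 1 ≃g PX n 1 := ⟨e, by intro u v; exact hiso u v⟩ with hφ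
  have hfix : ∀ v ∈ S, φ v = v := by
    intro v hv
    have hv1 : v.1 ≠ i0 := fun hc => hi0 ⟨v, hv, hc⟩
    show g v = v
    simp [hg, hv1]
  have := hdet φ hfix (i0, fun _ => 0)
  have h2 : φ (i0, fun _ => 0) = (i0, fun _ => 1) := by
    show g _ = _
    simp [hg]
    funext t
    simp
  rw [h2] at this
  have := congrFun (congrArg Prod.snd this) 0
  simp at this
lemma add_self_f (x y : Fin 1 → ZMod 2) : (x + y) + y = x := by
  funext t
  have : ∀ z w : ZMod 2, z + w + w = z := by decide
  exact this (x t) (y t)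

lemma mono_swap (hn : 3 ≤ n) {d : ℕ} (c : ZMod n × (Fin 1 → ZMod 2) → Fin d) (i0 : ZMod n)
    (hm : c (i0, fun _ => 0) = c (i0, fun _ => 1)) : ¬ IsDistinguishing (PX n 1) c := by
  intro hc
  set g : (ZMod n × (Fin 1 → ZMod 2)) → (ZMod n × (Fin 1 → ZMod 2)) :=
    fun v => (v.1, if v.1 = i0 then v.2 + (fun _ => 1) else v.2) with hg
  have hgg : ∀ v, g (g v) = v := by
    intro v
    by_cases hv : v.1 = i0
    · simp [hg, hv, add_one_one]
      exact Prod.ext hv.symm rfl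
    · simp [hg, hv]
  set e : (ZMod n × (Fin 1 → ZMod 2)) ≃ (ZMod n × (Fin 1 → ZMod 2)) :=
    ⟨g, g, hgg, hgg⟩ with he
  have hiso : ∀ u v, (PX n 1).Adj (e u) (e v) ↔ (PX n 1).Adj u v := by
    intro u v
    rw [PX_adj hn, PX_adj hn]
    rfl
  set φ : PX n 1 ≃g PX n 1 := ⟨e, by intro u v; exact hiso u v⟩ with hφ
  have h01 : ((fun _ => (0:ZMod 2)) + (fun _ => (1:ZMod 2)) : Fin 1 → ZMod 2) = fun _ => 1 := by
    funext t; show (0:ZMod 2) + 1 = 1; decide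
  have h11 : ((fun _ => (1:ZMod 2)) + (fun _ => (1:ZMod 2)) : Fin 1 → ZMod 2) = fun _ => 0 := by
    funext t; show (1:ZMod 2) + 1 = 0; decide
  have hpres : ∀ v, c (φ v) = c v := by
    intro v
    obtain ⟨j, x⟩ := v
    by_cases hj : j = i0
    · subst hj
      rcases fun_cases' x with rfl | rfl
      · show c (j, if j = j then _ else _) = _
        rw [if_pos rfl, h01]
        exact hm.symm
      · show c (j, if j = j then _ else _) = _
        rw [if_pos rfl, h11]
        exact hm
    · show c (j, if j = i0 then _ else _) = _
      rw [if_neg hj]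
  have := hc φ hpres (i0, fun _ => 0)
  have h2 : φ (i0, fun _ => 0) = (i0, fun _ => 1) := by
    show ((i0 : ZMod n), if i0 = i0 then _ else _) = _
    rw [if_pos rfl, h01]
  rw [h2] at this
  have := congrFun (congrArg Prod.snd this) 0
  simp at this

lemma dist_lower (hn : 3 ≤ n) (d : ℕ)
    (h : ∃ c : ZMod n × (Fin 1 → ZMod 2) → Fin d, IsDistinguishing (PX n 1) c) :
    3 ≤ d := by
  obtain ⟨c, hc⟩ := h
  by_contra hlt
  push_neg at hlt
  have hd : d = 0 ∨ d = 1 ∨ d = 2 := by omega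
  rcases hd with rfl | rfl | rfl
  · exact (c ((0:ZMod n), fun _ => 0)).elim0
  · exact mono_swap hn c 0 (Subsingleton.elim _ _) hc
  -- d = 2
  by_cases hmono : ∃ i : ZMod n, c (i, fun _ => 0) = c (i, fun _ => 1)
  · obtain ⟨i, hi⟩ := hmono
    exact mono_swap hn c i hi hc
  push_neg at hmono
  set s : ZMod n → ZMod 2 :=
    fun i => if c (i + 1, fun _ => 0) = c (i, fun _ => 0) then 0 else 1 with hs
  set g : (ZMod n × (Fin 1 → ZMod 2)) → (ZMod n × (Fin 1 → ZMod 2)) :=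
    fun v => (v.1 + 1, v.2 + (fun _ => s v.1)) with hg
  set g' : (ZMod n × (Fin 1 → ZMod 2)) → (ZMod n × (Fin 1 → ZMod 2)) :=
    fun v => (v.1 - 1, v.2 + (fun _ => s (v.1 - 1))) with hg'
  have hleft : ∀ v, g' (g v) = v := by
    intro v
    show (v.1 + 1 - 1, (v.2 + _) + _) = v
    rw [add_sub_cancel_right]
    rw [add_self_f]
  have hright : ∀ v, g (g' v) = v := by
    intro v
    show (v.1 - 1 + 1, (v.2 + _) + _) = v
    rw [sub_add_cancel]
    rw [add_self_f]
  set e : (ZMod n × (Fin 1 → ZMod 2)) ≃ (ZMod n × (Fin 1 → ZMod 2)) :=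
    ⟨g, g', hleft, hright⟩ with he
  have hiso : ∀ u v, (PX n 1).Adj (e u) (e v) ↔ (PX n 1).Adj u v := by
    intro u v
    rw [PX_adj hn, PX_adj hn]
    show (v.1 + 1 = u.1 + 1 + 1 ∨ u.1 + 1 = v.1 + 1 + 1) ↔ _
    constructor
    · rintro (h | h)
      · exact Or.inl (by linear_combination h)
      · exact Or.inr (by linear_combination h)
    · rintro (h | h)
      · exact Or.inl (by linear_combination h)
      · exact Or.inr (by linear_combination h)
  set φ : PX n 1 ≃g PX n 1 := ⟨e, by intro u v; exact hiso u v⟩ with hφ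
  have pig1 : ∀ a b t : Fin 2, a ≠ t → a ≠ b → b = t := by decide
  have pig2 : ∀ p q r t : Fin 2, p = q → p ≠ r → q ≠ t → r = t := by decide
  have pig3 : ∀ a t0 t1 : Fin 2, a ≠ t0 → t0 ≠ t1 → a = t1 := by decide
  have h00 : ((fun _ => (0:ZMod 2)) + (fun _ => (0:ZMod 2)) : Fin 1 → ZMod 2) = fun _ => 0 := by
    funext t; show (0:ZMod 2) + 0 = 0; decide
  have h01 : ((fun _ => (0:ZMod 2)) + (fun _ => (1:ZMod 2)) : Fin 1 → ZMod 2) = fun _ => 1 := by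
    funext t; show (0:ZMod 2) + 1 = 1; decide
  have h10 : ((fun _ => (1:ZMod 2)) + (fun _ => (0:ZMod 2)) : Fin 1 → ZMod 2) = fun _ => 1 := by
    funext t; show (1:ZMod 2) + 0 = 1; decide
  have h11 : ((fun _ => (1:ZMod 2)) + (fun _ => (1:ZMod 2)) : Fin 1 → ZMod 2) = fun _ => 0 := by
    funext t; show (1:ZMod 2) + 1 = 0; decide
  have hpres : ∀ v, c (φ v) = c v := by
    intro v
    obtain ⟨i, x⟩ := v
    by_cases hcc : c (i + 1, fun _ => 0) = c (i, fun _ => 0)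
    · have hsi : s i = 0 := if_pos hcc
      rcases fun_cases' x with rfl | rfl
      · show c (i + 1, _ + _) = _
        rw [hsi, h00]
        exact hcc
      · show c (i + 1, _ + _) = _
        rw [hsi, h10]
        exact pig2 _ _ _ _ hcc (hmono (i+1)) (hmono i)
    · have hsi : s i = 1 := if_neg hcc
      rcases fun_cases' x with rfl | rfl
      · show c (i + 1, _ + _) = _
        rw [hsi, h01]
        exact pig1 _ _ _ hcc (hmono (i+1))
      · show c (i + 1, _ + _) = _
        rw [hsi, h11]
        exact pig3 _ _ _ hcc (hmono i)
  have := hc φ hpres ((0:ZMod n), fun _ => 0)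
  have h2 := congrArg Prod.fst this
  show False
  have h3 : (0:ZMod n) + 1 = 0 := h2
  rw [zero_add] at h3
  exact one_ne' hn h3
def col3 : ZMod n × (Fin 1 → ZMod 2) → Fin 3 :=
  fun v =>
    if v.1 = 0 then (if v.2 = (fun _ => 0) then 0 else 2)
    else if v.1 = 1 then (if v.2 = (fun _ => 0) then 1 else 2)
    else (if v.2 = (fun _ => 0) then 0 else 1)

lemma onef_ne_zerof : (fun _ => (1:ZMod 2) : Fin 1 → ZMod 2) ≠ (fun _ => 0) :=
  fun h => zero_ne_one_f h.symm

lemma col3_apply_0 (i : ZMod n) :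
    col3 (i, fun _ => 0) = if i = 0 then 0 else if i = 1 then 1 else 0 := by
  simp [col3]

lemma col3_apply_1 (i : ZMod n) :
    col3 (i, fun _ => 1) = if i = 0 then 2 else if i = 1 then 2 else 1 := by
  simp [col3, onef_ne_zerof]

lemma col3_snd_inj (i : ZMod n) (x y : Fin 1 → ZMod 2)
    (h : col3 (i, x) = col3 (i, y)) : x = y := by
  rcases fun_cases' x with rfl | rfl <;> rcases fun_cases' y with rfl | rfl
  · rfl
  · rw [col3_apply_0, col3_apply_1] at h
    split_ifs at h <;> exact absurd h (by decide)
  · rw [col3_apply_0, col3_apply_1] at h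
    split_ifs at h <;> exact absurd h (by decide)
  · rfl

lemma col3_two (j : ZMod n) (x : Fin 1 → ZMod 2) (h : col3 (j, x) = 2) :
    j = 0 ∨ j = 1 := by
  by_contra hc
  push_neg at hc
  rcases fun_cases' x with rfl | rfl
  · rw [col3_apply_0, if_neg hc.1, if_neg hc.2] at h
    exact absurd h (by decide)
  · rw [col3_apply_1, if_neg hc.1, if_neg hc.2] at h
    exact absurd h (by decide)

lemma col3_fiber1_ne0 (x : Fin 1 → ZMod 2) (hn : 3 ≤ n) : col3 ((1 : ZMod n), x) ≠ 0 := by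
  have h10 : (1 : ZMod n) ≠ 0 := one_ne' hn
  rcases fun_cases' x with rfl | rfl
  · rw [col3_apply_0, if_neg h10, if_pos rfl]
    decide
  · rw [col3_apply_1, if_neg h10, if_pos rfl]
    decide

lemma dist_upper (hn : 3 ≤ n) (hn4 : n ≠ 4) :
    IsDistinguishing (PX n 1) (col3 (n := n)) := by
  intro φ hcol
  set F : ZMod n → ZMod n := fun i => (φ (i, fun _ => 0)).1 with hF
  have hfst : ∀ (i : ZMod n) (x : Fin 1 → ZMod 2), (φ (i, x)).1 = F i :=
    fun i x => iso_fst_eq hn hn4 φ i x _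
  -- injectivity of F
  have hGF : ∀ i, (φ.symm (F i, fun _ => 0)).1 = i := by
    intro i
    have h1 : (φ.symm (F i, fun _ => 0)).1 = (φ.symm (F i, (φ (i, fun _ => 0)).2)).1 :=
      iso_fst_eq hn hn4 φ.symm (F i) _ _
    have h2 : ((F i, (φ (i, fun _ => 0)).2) : ZMod n × (Fin 1 → ZMod 2))
        = φ (i, fun _ => 0) := Prod.mk.eta
    rw [h1, h2, RelIso.symm_apply_apply]
  have hFinj : Function.Injective F := by
    intro i j h
    rw [← hGF i, ← hGF j, h]
  -- colors transported
  have cφ : ∀ (i : ZMod n) (x : Fin 1 → ZMod 2),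
      col3 (F i, (φ (i, x)).2) = col3 (i, x) := by
    intro i x
    have h2 : ((F i, (φ (i, x)).2) : ZMod n × (Fin 1 → ZMod 2)) = φ (i, x) := by
      rw [← hfst i x]
    rw [h2]
    exact hcol (i, x)
  -- F 0 = 0
  have hc01 : col3 ((0:ZMod n), fun _ => (1:ZMod 2)) = 2 := by
    rw [col3_apply_1, if_pos rfl]
  have hc00 : col3 ((0:ZMod n), fun _ => (0:ZMod 2)) = 0 := by
    rw [col3_apply_0, if_pos rfl]
  have hF0 : F 0 = 0 := by
    have h1 := cφ 0 (fun _ => 1)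
    rw [hc01] at h1
    have h2 := col3_two _ _ h1
    have h3 := cφ 0 (fun _ => 0)
    rw [hc00] at h3
    rcases h2 with h | h
    · exact h
    · rw [h] at h3
      exact absurd h3 (col3_fiber1_ne0 _ hn)
  -- F 1 = 1
  have hc11 : col3 ((1:ZMod n), fun _ => (1:ZMod 2)) = 2 := by
    rw [col3_apply_1, if_neg (one_ne' hn), if_pos rfl]
  have hF1 : F 1 = 1 := by
    have h1 := cφ 1 (fun _ => 1)
    rw [hc11] at h1
    rcases col3_two _ _ h1 with h | h
    · rw [← hF0] at h
      exact absurd (hFinj h) (one_ne' hn)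
    · exact h
  -- adjacency step
  have hstep : ∀ i : ZMod n, F (i + 1) = F i + 1 ∨ F i = F (i + 1) + 1 := by
    intro i
    have hadj : (PX n 1).Adj (i, fun _ => 0) (i + 1, fun _ => 0) :=
      (PX_adj hn _ _).mpr (Or.inl rfl)
    have h2 := φ.map_rel_iff.mpr hadj
    have h3 := (PX_adj hn _ _).mp h2
    exact h3
  -- F is the identity on ℕ-casts
  have hFn : ∀ m : ℕ, F (m : ZMod n) = (m : ZMod n) ∧
      F ((m : ZMod n) + 1) = (m : ZMod n) + 1 := by
    intro m
    induction m with
    | zero =>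
      constructor
      · simpa using hF0
      · simpa using hF1
    | succ m ih =>
      have hcast : ((m + 1 : ℕ) : ZMod n) = (m : ZMod n) + 1 := by push_cast; ring
      constructor
      · rw [hcast]; exact ih.2
      · rw [hcast]
        rcases hstep ((m : ZMod n) + 1) with h | h
        · rw [ih.2] at h; exact h
        · exfalso
          rw [ih.2] at h
          have h4 : F ((m : ZMod n) + 1 + 1) = (m : ZMod n) := by
            linear_combination -h
          have h4' : F ((m : ZMod n) + 1 + 1) = F ((m : ZMod n)) := by
            rw [h4, ih.1]
          have h5 := hFinj h4'
          exact two_ne' hn (by linear_combination h5)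
  have hFall : ∀ i : ZMod n, F i = i := by
    intro i
    haveI : NeZero n := ⟨by omega⟩
    have hv : ((i.val : ℕ) : ZMod n) = i := ZMod.natCast_rightInverse i
    rw [← hv]
    exact (hFn i.val).1
  -- conclude
  intro v
  obtain ⟨i, x⟩ := v
  have h0 : φ (i, fun _ => 0) = (i, fun _ => 0) := by
    have h1 := cφ i (fun _ => 0)
    rw [hFall i] at h1
    have h2 := col3_snd_inj i _ _ h1
    exact Prod.ext ((hfst i _).trans (hFall i)) h2
  exact iso_apply_eq hn hn4 φ i h0 x
end PXaux

/-- For `n ≥ 3`, `n ≠ 4`, the graph `PX(n,1)` has determining number `n` and distinguishing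
number `3`. -/
theorem det_dist_PX_n_one (n : ℕ) (hn : 3 ≤ n) (hn4 : n ≠ 4) :
    detNum (PX n 1) = n ∧ distNum (PX n 1) = 3 := by
  constructor
  · apply le_antisymm
    · exact Nat.sInf_le (det_upper hn hn4)
    · exact le_csInf ⟨n, det_upper hn hn4⟩ (fun m hm => det_lower hn hn4 m hm)
  · apply le_antisymm
    · exact Nat.sInf_le ⟨col3, dist_upper hn hn4⟩
    · exact le_csInf ⟨3, col3, dist_upper hn hn4⟩ (fun d hd => dist_lower hn d hd)
end

section
/- The Praeger–Xu graph PX(3,2) satisfies Dist(PX(3,2)) = 2 and ρ(PX(3,2)) = 3. -/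
/-- The cost of 2-distinguishing `G`: the minimum cardinality of a set `R` of vertices
such that the identity is the only automorphism of `G` mapping `R` onto itself setwise. -/
noncomputable def cost2 {V : Type*} (G : SimpleGraph V) : ℕ :=
  sInf {m | ∃ R : Set V, R.ncard = m ∧
    ∀ φ : G ≃g G, ⇑φ '' R = R → ∀ v, φ v = v}

abbrev Vx : Type := ZMod 3 × (Fin 2 → ZMod 2)

lemma PX_adj_iff (u v : Vx) : (PX 3 2).Adj u v ↔
    u ≠ v ∧ ((v.1 = u.1 + 1 ∧ v.2 0 = u.2 1) ∨ (u.1 = v.1 + 1 ∧ u.2 0 = v.2 1)) := by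
  unfold PX
  rw [SimpleGraph.fromRel_adj]
  apply and_congr_right'
  apply or_congr <;> apply and_congr_right' <;>
  · constructor
    · intro h; exact h 0 (by norm_num)
    · intro h t ht
      have ht0 : t = 0 := by omega
      subst ht0
      exact h

instance : DecidableRel (PX 3 2).Adj := fun u v => decidable_of_iff' _ (PX_adj_iff u v)

def epsFun (ε : ZMod 3 → ZMod 2) (v : Vx) : Vx :=
  (v.1, ![v.2 0 + ε v.1, v.2 1 + ε (v.1 + 1)])

def reflFun (m : ZMod 3) (v : Vx) : Vx :=
  (m - v.1, ![v.2 1, v.2 0])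

lemma epsFun_invol : ∀ (ε : ZMod 3 → ZMod 2) (v : Vx), epsFun ε (epsFun ε v) = v := by decide

lemma reflFun_invol : ∀ (m : ZMod 3) (v : Vx), reflFun m (reflFun m v) = v := by decide

lemma eps_adj : ∀ (ε : ZMod 3 → ZMod 2) (a b : Vx),
    (PX 3 2).Adj (epsFun ε a) (epsFun ε b) ↔ (PX 3 2).Adj a b := by decide

lemma refl_adj : ∀ (m : ZMod 3) (a b : Vx),
    (PX 3 2).Adj (reflFun m a) (reflFun m b) ↔ (PX 3 2).Adj a b := by decide

def epsIso (ε : ZMod 3 → ZMod 2) : PX 3 2 ≃g PX 3 2 :=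
  ⟨⟨epsFun ε, epsFun ε, epsFun_invol ε, epsFun_invol ε⟩, fun {a b} => eps_adj ε a b⟩

def reflIso (m : ZMod 3) : PX 3 2 ≃g PX 3 2 :=
  ⟨⟨reflFun m, reflFun m, reflFun_invol m, reflFun_invol m⟩, fun {a b} => refl_adj m a b⟩

lemma snd_eta (x : Fin 2 → ZMod 2) : ![x 0, x 1] = x := by
  funext t; fin_cases t <;> rfl

lemma eps_fix (ε : ZMod 3 → ZMod 2) (v : Vx) (h0 : ε v.1 = 0) (h1 : ε (v.1 + 1) = 0) :
    epsFun ε v = v := by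
  simp only [epsFun, h0, h1, add_zero, snd_eta]

lemma eps_ne (ε : ZMod 3 → ZMod 2) (j : ZMod 3) (h : ε j ≠ 0) :
    epsFun ε ((j, ![0,0]) : Vx) ≠ (j, ![0,0]) := by
  intro he
  apply h
  have := congrArg (fun p : Vx => p.2 0) he
  simpa [epsFun] using this

abbrev va : Vx := (1, ![0,0])
abbrev vb : Vx := (0, ![0,0])
abbrev vc : Vx := (0, ![1,1])
abbrev w1 : Vx := (2, ![0,0])
abbrev w2 : Vx := (2, ![0,1])
abbrev w3 : Vx := (0, ![1,0])
abbrev w4 : Vx := (1, ![0,1])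
abbrev w5 : Vx := (2, ![1,0])
abbrev w6 : Vx := (1, ![1,0])
abbrev w7 : Vx := (2, ![1,1])
abbrev w8 : Vx := (1, ![1,1])
abbrev w9 : Vx := (0, ![0,1])

def R0 : Set Vx := {va, vb, vc}

lemma epsIso_apply (ε : ZMod 3 → ZMod 2) (v : Vx) : ⇑(epsIso ε) v = epsFun ε v := rfl

lemma transIso_apply (m : ZMod 3) (ε : ZMod 3 → ZMod 2) (v : Vx) :
    ⇑((reflIso m).trans (epsIso ε)) v = epsFun ε (reflFun m v) := rfl

lemma fix_uniq (φ : PX 3 2 ≃g PX 3 2) {p q w : Vx} (hp : φ p = p) (hq : φ q = q)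
    (h1 : (PX 3 2).Adj p w) (h2 : (PX 3 2).Adj q w)
    (hu : ∀ u, (PX 3 2).Adj p u → (PX 3 2).Adj q u → u = w) : φ w = w := by
  have a1 : (PX 3 2).Adj (φ p) (φ w) := φ.map_rel_iff.mpr h1
  have a2 : (PX 3 2).Adj (φ q) (φ w) := φ.map_rel_iff.mpr h2
  rw [hp] at a1; rw [hq] at a2
  exact hu _ a1 a2

lemma fix_pair (φ : PX 3 2 ≃g PX 3 2) {p q o w : Vx} (hp : φ p = p) (hq : φ q = q)
    (ho : φ o = o) (hne : o ≠ w)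
    (h1 : (PX 3 2).Adj p w) (h2 : (PX 3 2).Adj q w)
    (hu : ∀ u, (PX 3 2).Adj p u → (PX 3 2).Adj q u → u = o ∨ u = w) : φ w = w := by
  have a1 : (PX 3 2).Adj (φ p) (φ w) := φ.map_rel_iff.mpr h1
  have a2 : (PX 3 2).Adj (φ q) (φ w) := φ.map_rel_iff.mpr h2
  rw [hp] at a1; rw [hq] at a2
  rcases hu _ a1 a2 with h | h
  · have := φ.injective (h.trans ho.symm)
    exact absurd this.symm hne
  · exact h

lemma rigid : ∀ φ : PX 3 2 ≃g PX 3 2, ⇑φ '' R0 = R0 → ∀ v, φ v = v := by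
  intro φ himg
  have hmem : ∀ u ∈ R0, φ u ∈ R0 := fun u hu => himg ▸ Set.mem_image_of_mem _ hu
  have ha' : φ va = va ∨ φ va = vb ∨ φ va = vc := by
    simpa [R0] using hmem va (by simp [R0])
  have hb' : φ vb = va ∨ φ vb = vb ∨ φ vb = vc := by
    simpa [R0] using hmem vb (by simp [R0])
  have hc' : φ vc = va ∨ φ vc = vb ∨ φ vc = vc := by
    simpa [R0] using hmem vc (by simp [R0])
  have key : φ va = va ∧ φ vb = vb ∧ φ vc = vc := by
    rcases ha' with ha | ha | ha <;> rcases hb' with hb | hb | hb <;>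
      rcases hc' with hc | hc | hc <;>
      first
      | exact ⟨ha, hb, hc⟩
      | exact absurd (φ.injective (ha.trans hb.symm)) (by decide)
      | exact absurd (φ.injective (ha.trans hc.symm)) (by decide)
      | exact absurd (φ.injective (hb.trans hc.symm)) (by decide)
      | (have h2 : (PX 3 2).Adj (φ va) (φ vb) := φ.map_rel_iff.mpr (by decide)
         rw [ha, hb] at h2
         exact absurd h2 (by decide))
      | (have h3 : (PX 3 2).Adj (φ va) (φ w2) := φ.map_rel_iff.mpr (by decide)
         have h4 : (PX 3 2).Adj (φ vc) (φ w2) := φ.map_rel_iff.mpr (by decide)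
         rw [ha] at h3; rw [hc] at h4
         exact absurd (And.intro h3 h4)
           (fun hh => (show ∀ u, (PX 3 2).Adj vb u → (PX 3 2).Adj vc u → False by decide) _ hh.1 hh.2))
  obtain ⟨hfa, hfb, hfc⟩ := key
  have hf1 : φ w1 = w1 := fix_uniq φ hfa hfb (by decide) (by decide) (by decide)
  have hf2 : φ w2 = w2 := fix_uniq φ hfa hfc (by decide) (by decide) (by decide)
  have hf3 : φ w3 = w3 := fix_uniq φ hfa hf2 (by decide) (by decide) (by decide)
  have hf4 : φ w4 = w4 := fix_pair φ hfb hf3 hfa (by decide) (by decide) (by decide) (by decide)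
  have hf5 : φ w5 = w5 := fix_uniq φ hfb hf4 (by decide) (by decide) (by decide)
  have hf6 : φ w6 = w6 := fix_uniq φ hfc hf1 (by decide) (by decide) (by decide)
  have hf7 : φ w7 = w7 := fix_pair φ hfc hf3 hf2 (by decide) (by decide) (by decide) (by decide)
  have hf8 : φ w8 = w8 := fix_uniq φ hfc hf5 (by decide) (by decide) (by decide)
  have hf9 : φ w9 = w9 := fix_pair φ hf1 hf5 hfb (by decide) (by decide) (by decide) (by decide)
  intro v
  obtain ⟨i, x⟩ := v
  have hx : x = ![x 0, x 1] := (snd_eta x).symm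
  have hi := (show ∀ j : ZMod 3, j = 0 ∨ j = 1 ∨ j = 2 by decide) i
  have h0 := (show ∀ s : ZMod 2, s = 0 ∨ s = 1 by decide) (x 0)
  have h1 := (show ∀ s : ZMod 2, s = 0 ∨ s = 1 by decide) (x 1)
  rcases hi with hi | hi | hi <;> subst hi <;>
    rcases h0 with h0 | h0 <;> rcases h1 with h1 | h1 <;>
    rw [h0, h1] at hx <;> subst hx <;> assumption

lemma swap_iso (a b : Vx) (h1 : a.1 ≠ b.1) :
    ∃ φ : PX 3 2 ≃g PX 3 2, φ a = b ∧ φ b = a := by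
  have hz : ∀ x y : ZMod 2, x + (x + y) = y := by decide
  have hz2 : ∀ x y : ZMod 2, x + (y + x) = y := by decide
  have hself1 : ∀ j : ZMod 3, j + 1 ≠ j := by decide
  have hself2 : ∀ j : ZMod 3, j ≠ j + 1 := by decide
  refine ⟨(reflIso (a.1 + b.1)).trans
    (epsIso (fun j => if j = b.1 ∨ j = a.1 + 1 then a.2 1 + b.2 0 else a.2 0 + b.2 1)), ?_, ?_⟩
  · rw [transIso_apply]
    have hm : a.1 + b.1 - a.1 = b.1 := add_sub_cancel_left a.1 b.1
    simp only [epsFun, reflFun, hm, Matrix.cons_val_zero, Matrix.cons_val_one, Matrix.head_cons]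
    have he2 : (if b.1 + 1 = b.1 ∨ b.1 + 1 = a.1 + 1 then a.2 1 + b.2 0 else a.2 0 + b.2 1)
        = a.2 0 + b.2 1 := by
      refine if_neg ?_
      rintro (h | h)
      · exact hself1 b.1 h
      · exact h1 (add_right_cancel h).symm
    rw [if_pos (Or.inl trivial), he2, hz, hz, snd_eta]
  · rw [transIso_apply]
    have hm : a.1 + b.1 - b.1 = a.1 := add_sub_cancel_right a.1 b.1
    simp only [epsFun, reflFun, hm, Matrix.cons_val_zero, Matrix.cons_val_one, Matrix.head_cons]
    have he1 : (if a.1 = b.1 ∨ a.1 = a.1 + 1 then a.2 1 + b.2 0 else a.2 0 + b.2 1)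
        = a.2 0 + b.2 1 := by
      refine if_neg ?_
      rintro (h | h)
      · exact h1 h
      · exact hself2 a.1 h
    rw [he1, if_pos (Or.inr trivial), hz2, hz2, snd_eta]


/-- `Dist(PX(3,2)) = 2` and `ρ(PX(3,2)) = 3`. -/
theorem dist_cost_PX_three_two : distNum (PX 3 2) = 2 ∧ cost2 (PX 3 2) = 3 := by
  have e0 : ∀ j : ZMod 3, (if j = j + 2 then (1 : ZMod 2) else 0) = 0 := by decide
  have e1 : ∀ j : ZMod 3, (if j + 1 = j + 2 then (1 : ZMod 2) else 0) = 0 := by decide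
  constructor
  · -- distNum
    have mem2 : 2 ∈ {d | ∃ c : Vx → Fin d, IsDistinguishing (PX 3 2) c} := by
      refine ⟨fun v => if v = va ∨ v = vb ∨ v = vc then 1 else 0, ?_⟩
      intro φ hφ
      apply rigid
      have hiff : ∀ v : Vx, (φ v = va ∨ φ v = vb ∨ φ v = vc) ↔ (v = va ∨ v = vb ∨ v = vc) := by
        intro v
        have h := hφ v
        beta_reduce at h
        constructor
        · intro hh
          by_contra hh2
          rw [if_pos hh, if_neg hh2] at h
          exact absurd h (by decide)
        · intro hh
          by_contra hh2
          rw [if_neg hh2, if_pos hh] at h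
          exact absurd h (by decide)
      ext u
      simp only [Set.mem_image, R0, Set.mem_insert_iff, Set.mem_singleton_iff]
      constructor
      · rintro ⟨v, hv, rfl⟩
        exact (hiff v).mpr hv
      · intro hu
        refine ⟨φ.symm u, ?_, φ.apply_symm_apply u⟩
        have h2 := hiff (φ.symm u)
        rw [φ.apply_symm_apply] at h2
        exact h2.mp hu
    apply le_antisymm (Nat.sInf_le mem2)
    apply le_csInf ⟨2, mem2⟩
    rintro d ⟨c, hc⟩
    by_contra hlt
    push_neg at hlt
    interval_cases d
    · exact (c vb).elim0
    · have := hc (epsIso fun _ => 1) (fun v => Subsingleton.elim _ _) vb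
      exact absurd this (by decide)
  · -- cost2
    have mem3 : 3 ∈ {m | ∃ R : Set Vx, R.ncard = m ∧
        ∀ φ : PX 3 2 ≃g PX 3 2, ⇑φ '' R = R → ∀ v, φ v = v} := by
      refine ⟨R0, ?_, rigid⟩
      have hnm : va ∉ ({vb, vc} : Set Vx) := by
        simp only [Set.mem_insert_iff, Set.mem_singleton_iff]
        decide
      rw [show R0 = insert va {vb, vc} from rfl, Set.ncard_insert_of_notMem hnm,
        Set.ncard_pair (by decide)]
    apply le_antisymm (Nat.sInf_le mem3)
    apply le_csInf ⟨3, mem3⟩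
    rintro m ⟨R', hcard, hrig⟩
    by_contra hlt
    push_neg at hlt
    interval_cases m
    · rw [Set.ncard_eq_zero] at hcard
      subst hcard
      have := hrig (epsIso fun _ => 1) (by rw [Set.image_empty]) vb
      exact absurd this (by decide)
    · obtain ⟨a, rfl⟩ := Set.ncard_eq_one.mp hcard
      have hfix : epsFun (fun j => if j = a.1 + 2 then 1 else 0) a = a :=
        eps_fix _ _ (e0 a.1) (e1 a.1)
      have himg : ⇑(epsIso (fun j => if j = a.1 + 2 then 1 else 0)) '' {a} = {a} := by
        rw [Set.image_singleton, epsIso_apply, hfix]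
      have hall := hrig (epsIso (fun j => if j = a.1 + 2 then 1 else 0)) himg (a.1 + 2, ![0, 0])
      rw [epsIso_apply] at hall
      exact eps_ne _ _ (by rw [if_pos rfl]; exact one_ne_zero) hall
    · obtain ⟨a, b, hab, rfl⟩ := Set.ncard_eq_two.mp hcard
      by_cases h1 : a.1 = b.1
      · have hfa : epsFun (fun j => if j = a.1 + 2 then 1 else 0) a = a :=
          eps_fix _ _ (e0 a.1) (e1 a.1)
        have hfb : epsFun (fun j => if j = a.1 + 2 then 1 else 0) b = b := by
          refine eps_fix _ _ ?_ ?_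
          · rw [← h1]; exact e0 a.1
          · rw [← h1]; exact e1 a.1
        have himg : ⇑(epsIso (fun j => if j = a.1 + 2 then 1 else 0)) '' {a, b} = {a, b} := by
          rw [Set.image_insert_eq, Set.image_singleton, epsIso_apply, epsIso_apply, hfa, hfb]
        have hall := hrig (epsIso (fun j => if j = a.1 + 2 then 1 else 0)) himg (a.1 + 2, ![0, 0])
        rw [epsIso_apply] at hall
        exact eps_ne _ _ (by rw [if_pos rfl]; exact one_ne_zero) hall
      · obtain ⟨φ, hA, hB⟩ := swap_iso a b h1
        have himg : ⇑φ '' {a, b} = {a, b} := by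
          rw [Set.image_insert_eq, Set.image_singleton, hA, hB, Set.pair_comm]
        have := hrig φ himg a
        exact hab ((hA.symm.trans this).symm)
end
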